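/- arXiv:1812.09763 — 3 statements merged into one kernel-verified Lean document; each statement's English description precedes it below -/
import Mathlib

section
/- Let f = (f_n)_{n≥0} and g = (g_n)_{n≥0} be martingales with respect to the same filtration, fix λ > 0 and a positive integer n_max, and define stopping times recursively by S_0 := 0 and S_k := min{ n > S_{k−1} : |Σ_{S_{k−1} < i < j ≤ n} df_i dg_j| ≥ λ/3, or max_{n' ∈ (S_{k−1}, n]} |f_{n'} − f_{S_{k−1}}| · |g_n − g_{n'}| ≥ λ/3 } (with min ∅ = ∞). Then every interval of integers (n', n''] ⊆ (0, n_max] satisfying |Σ_{n' < i < j ≤ n''} df_i dg_j| ≥ λ contains at least one of the stopping times S_k with k ≥ 1; consequently, the λ-jump counting function N_λ(f,g) := sup over all m ∈ ℕ and 0 ≤ n_0 < n_1 < ⋯ < n_m ≤ n_max of card{ k ∈ {1,…,m} : |Σ_{n_{k−1} < i < j ≤ n_k} df_i dg_j| ≥ λ } satisfies N_λ(f,g) ≤ sup{ k ∈ ℕ∪{0} : S_k ≤ n_max } pointwise. -/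
open MeasureTheory ENNReal

noncomputable section

/-- The truncated martingale paraproduct `Π_{n,n'}(f,g) = ∑_{n < i < j ≤ n'} df_i dg_j`. -/
def truncPP {Ω : Type} (f g : ℕ → Ω → ℝ) (n n' : ℕ) (ω : Ω) : ℝ :=
  ∑ j ∈ Finset.Ioc n n', ∑ i ∈ Finset.Ioo n j,
    (f i ω - f (i - 1) ω) * (g j ω - g (j - 1) ω)

/-- The stopping condition: `|Σ_{m < i < j ≤ n} df_i dg_j| ≥ λ/3` or
`max_{n' ∈ (m, n]} |f_{n'} − f_m|·|g_n − g_{n'}| ≥ λ/3`. -/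
def jumpCond {Ω : Type} (lam : ℝ) (f g : ℕ → Ω → ℝ) (m n : ℕ) (ω : Ω) : Prop :=
  lam / 3 ≤ |truncPP f g m n ω| ∨
    ∃ n' : ℕ, m < n' ∧ n' ≤ n ∧ lam / 3 ≤ |f n' ω - f m ω| * |g n ω - g n' ω|

/-- The recursively defined stopping times `S_0 = 0`,
`S_k = min{n > S_{k−1} : jumpCond (S_{k−1}, n)}`, with `min ∅ = ∞`. -/
def stopSeq {Ω : Type} (lam : ℝ) (f g : ℕ → Ω → ℝ) : ℕ → Ω → ℕ∞
  | 0, _ => 0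
  | k + 1, ω => sInf {x : ℕ∞ | ∃ m n : ℕ, stopSeq lam f g k ω = (m : ℕ∞) ∧ x = (n : ℕ∞) ∧
      m < n ∧ jumpCond lam f g m n ω}

/-- The λ-jump counting function of the truncated paraproducts, restricted to times `≤ nmax`. -/
def jumpCount {Ω : Type} (lam : ℝ) (f g : ℕ → Ω → ℝ) (nmax : ℕ) (ω : Ω) : ℕ∞ :=
  ⨆ (m : ℕ) (n : Fin (m + 1) → ℕ) (_ : StrictMono n) (_ : n (Fin.last m) ≤ nmax),
    ((Finset.univ.filter
      fun k : Fin m => lam ≤ |truncPP f g (n k.castSucc) (n k.succ) ω|).card : ℕ∞)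

/-!
Whenever the stopping condition has not fired on a stretch `(m, n'']`, the splitting identity
`Π_{m,n''} = Π_{m,n'} + (f_{n'} - f_m)(g_{n''} - g_{n'}) + Π_{n',n''}` bounds `|Π_{n',n''}|` by three
terms each below `λ/3`. So if `|Π_{n',n''}| ≥ λ` and `S_k` is the last stopping time `≤ n'`, the
condition fires at some `n ∈ (S_k, n'']`, hence `S_{k+1} ∈ (n', n'']`. Disjoint intervals of a
chain `n_0 < ⋯ < n_m` thus receive distinct stopping times, all `≤ nmax`.
-/

lemma Finset.sum_Ioc_sub_pred {M : Type*} [AddCommGroup M] (u : ℕ → M) {m n : ℕ} (h : m ≤ n) :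
    ∑ i ∈ Finset.Ioc m n, (u i - u (i - 1)) = u n - u m := by
  induction n, h using Nat.le_induction with
  | base => simp
  | succ n hn ih => rw [Finset.sum_Ioc_succ_top hn, ih, Nat.add_sub_cancel, sub_add_sub_cancel']

lemma exists_and_not_succ_of_not {P : ℕ → Prop} (h0 : P 0) {n : ℕ} (hn : ¬ P n) :
    ∃ k, P k ∧ ¬ P (k + 1) := by
  induction n with
  | zero => exact absurd h0 hn
  | succ n ih => by_cases h : P n; exacts [⟨n, h, hn⟩, ih h]

lemma Monotone.eq_of_mem_Ioc_of_mem_Ioc {β : Type*} [Preorder β] {m : ℕ}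
    {n : Fin (m + 1) → β} (hn : Monotone n) {a b : Fin m} {x : β}
    (ha : x ∈ Set.Ioc (n a.castSucc) (n a.succ)) (hb : x ∈ Set.Ioc (n b.castSucc) (n b.succ)) :
    a = b := by
  by_contra hab
  rcases lt_or_gt_of_ne hab with h | h
  · exact (ha.2.trans (hn (Fin.succ_le_castSucc_iff.mpr h))).not_gt hb.1
  · exact (hb.2.trans (hn (Fin.succ_le_castSucc_iff.mpr h))).not_gt ha.1

lemma card_le_iSup_of_injOn {α : Type*} {T : Finset α} {j : α → ℕ} {P : ℕ → Prop}
    (hinj : Set.InjOn j T) (hpos : ∀ a ∈ T, 1 ≤ j a) (hP : ∀ a ∈ T, P (j a)) :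
    (T.card : ℕ∞) ≤ ⨆ (k : ℕ) (_ : P k), (k : ℕ∞) := by
  rcases T.eq_empty_or_nonempty with rfl | hT
  · simp
  obtain ⟨a, ha, hmax⟩ := T.exists_max_image j hT
  have hsub : T.image j ⊆ Finset.Icc 1 (j a) := fun x hx => by
    obtain ⟨b, hb, rfl⟩ := Finset.mem_image.mp hx
    exact Finset.mem_Icc.mpr ⟨hpos b hb, hmax b hb⟩
  have hcard : T.card ≤ j a := by
    simpa [Finset.card_image_of_injOn hinj] using Finset.card_le_card hsub
  exact (Nat.cast_le.mpr hcard).trans (le_iSup₂ (f := fun k (_ : P k) => (k : ℕ∞)) (j a) (hP a ha))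

section

variable {Ω : Type} (lam : ℝ) (f g : ℕ → Ω → ℝ) (ω : Ω)

lemma truncPP_split {m n' n'' : ℕ} (h1 : m ≤ n') (h2 : n' ≤ n'') :
    truncPP f g m n'' ω = truncPP f g m n' ω
      + (f n' ω - f m ω) * (g n'' ω - g n' ω) + truncPP f g n' n'' ω := by
  have inner : ∀ j ∈ Finset.Ioc n' n'',
      ∑ i ∈ Finset.Ioo m j, (f i ω - f (i - 1) ω) * (g j ω - g (j - 1) ω)
        = (f n' ω - f m ω) * (g j ω - g (j - 1) ω)
          + ∑ i ∈ Finset.Ioo n' j, (f i ω - f (i - 1) ω) * (g j ω - g (j - 1) ω) := by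
    intro j hj
    have hj' : n' ≤ j - 1 := by simp only [Finset.mem_Ioc] at hj; omega
    rw [← Finset.Ioc_sub_one_right_eq_Ioo, ← Finset.Ioc_sub_one_right_eq_Ioo,
      ← Finset.sum_Ioc_consecutive _ h1 hj', ← Finset.sum_mul,
      Finset.sum_Ioc_sub_pred (f · ω) h1]
  unfold truncPP
  rw [← Finset.sum_Ioc_consecutive _ h1 h2, Finset.sum_congr rfl inner, Finset.sum_add_distrib,
    ← Finset.mul_sum, Finset.sum_Ioc_sub_pred (g · ω) h2, add_assoc]

lemma abs_truncPP_lt_of_forall_not_jumpCond {m n' n'' : ℕ}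
    (hquiet : ∀ n, m < n → n ≤ n'' → ¬ jumpCond lam f g m n ω) (hm : m ≤ n') (hn : n' < n'') :
    |truncPP f g n' n'' ω| < lam := by
  have hfar := hquiet n'' (hm.trans_lt hn) le_rfl
  simp only [jumpCond, not_or, not_exists, not_and, not_le] at hfar hquiet
  obtain ⟨hfar_pp, hfar_cross⟩ := hfar
  rcases hm.eq_or_lt with rfl | hlt
  · linarith [abs_nonneg (truncPP f g m n'' ω)]
  have hnear_pp := (hquiet n' hlt hn.le).1
  calc |truncPP f g n' n'' ω|
      = |truncPP f g m n'' ω - truncPP f g m n' ω - (f n' ω - f m ω) * (g n'' ω - g n' ω)| := by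
        rw [truncPP_split f g ω hlt.le hn.le]; ring_nf
    _ ≤ |truncPP f g m n'' ω| + |truncPP f g m n' ω| + |f n' ω - f m ω| * |g n'' ω - g n' ω| := by
        rw [← abs_mul]; exact (abs_sub _ _).trans (add_le_add_left (abs_sub _ _) _)
    _ < lam := by linarith [hfar_cross n' hlt hn.le]

lemma stopSeq_succ_mem {k : ℕ} (h : stopSeq lam f g (k + 1) ω ≠ ⊤) :
    ∃ m n : ℕ, stopSeq lam f g k ω = m ∧ stopSeq lam f g (k + 1) ω = n ∧ m < n ∧
      jumpCond lam f g m n ω := by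
  obtain ⟨m, n, hm, hn, hmn, hj⟩ := csInf_mem (Set.nonempty_iff_ne_empty.mpr
    fun hempty => h <| (congrArg sInf hempty).trans sInf_empty)
  exact ⟨m, n, hm, hn, hmn, hj⟩

lemma stopSeq_succ_le {k m n : ℕ} (hk : stopSeq lam f g k ω = m) (hmn : m < n)
    (hj : jumpCond lam f g m n ω) : stopSeq lam f g (k + 1) ω ≤ n :=
  sInf_le ⟨m, n, hk, rfl, hmn, hj⟩

lemma le_stopSeq (k : ℕ) : (k : ℕ∞) ≤ stopSeq lam f g k ω := by
  induction k with
  | zero => simp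
  | succ k ih =>
    by_cases htop : stopSeq lam f g (k + 1) ω = ⊤
    · simp [htop]
    obtain ⟨m, n, hm, hn, hmn, -⟩ := stopSeq_succ_mem lam f g ω htop
    rw [hm, Nat.cast_le] at ih
    rw [hn, Nat.cast_le]
    omega

theorem exists_stopSeq_mem_Ioc {n' n'' : ℕ} (hlt : n' < n'')
    (hjump : lam ≤ |truncPP f g n' n'' ω|) :
    ∃ k : ℕ, 1 ≤ k ∧ ∃ m : ℕ, stopSeq lam f g k ω = (m : ℕ∞) ∧ n' < m ∧ m ≤ n'' := by
  obtain ⟨k, hk, hk1⟩ := exists_and_not_succ_of_not (P := fun k => stopSeq lam f g k ω ≤ n')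
    (by simp [stopSeq]) (n := n' + 1)
    (not_le.mpr ((Nat.cast_lt.mpr n'.lt_succ_self).trans_le (le_stopSeq lam f g ω _)))
  obtain ⟨m, hm⟩ := ENat.ne_top_iff_exists.mp (ne_top_of_le_ne_top (ENat.natCast_ne_top n') hk)
  have hmn' : m ≤ n' := by rw [← hm] at hk; exact_mod_cast hk
  obtain ⟨n, hmn, hnn'', hj⟩ : ∃ n, m < n ∧ n ≤ n'' ∧ jumpCond lam f g m n ω := by
    by_contra! hquiet
    exact (abs_truncPP_lt_of_forall_not_jumpCond lam f g ω hquiet hmn' hlt).not_ge hjump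
  have hle : stopSeq lam f g (k + 1) ω ≤ n'' :=
    (stopSeq_succ_le lam f g ω hm.symm hmn hj).trans (Nat.cast_le.mpr hnn'')
  obtain ⟨N, hN⟩ := ENat.ne_top_iff_exists.mp (ne_top_of_le_ne_top (ENat.natCast_ne_top _) hle)
  rw [← hN] at hk1 hle
  exact ⟨k + 1, k.succ_pos, N, hN.symm, by exact_mod_cast not_le.mp hk1, by exact_mod_cast hle⟩

theorem jumpCount_le_iSup_stopSeq (nmax : ℕ) :
    jumpCount lam f g nmax ω ≤ ⨆ (k : ℕ) (_ : stopSeq lam f g k ω ≤ (nmax : ℕ∞)), (k : ℕ∞) := by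
  refine iSup_le fun m => iSup_le fun n => iSup_le fun hn => iSup_le fun hlast => ?_
  set T := Finset.univ.filter fun a : Fin m => lam ≤ |truncPP f g (n a.castSucc) (n a.succ) ω|
  have hstop : ∀ a ∈ T, ∃ k, 1 ≤ k ∧
      ∃ x : ℕ, stopSeq lam f g k ω = x ∧ n a.castSucc < x ∧ x ≤ n a.succ := fun a ha =>
    exists_stopSeq_mem_Ioc lam f g ω (hn a.castSucc_lt_succ) (Finset.mem_filter.mp ha).2
  choose! j hj_pos x hx hx_lo hx_hi using hstop
  refine card_le_iSup_of_injOn (fun a ha b hb hab => ?_) hj_pos fun a ha => ?_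
  · have hxab : x a = x b := by
      have h := hx a ha
      rwa [hab, hx b hb, Nat.cast_inj, eq_comm] at h
    refine hn.monotone.eq_of_mem_Ioc_of_mem_Ioc ⟨hx_lo a ha, hx_hi a ha⟩ ?_
    rw [hxab]
    exact ⟨hx_lo b hb, hx_hi b hb⟩
  · rw [hx a ha, Nat.cast_le]
    exact (hx_hi a ha).trans ((hn.monotone (Fin.le_last _)).trans hlast)

end

theorem stopping_times_dominate_jump_count_general
    {Ω : Type} (f g : ℕ → Ω → ℝ)
    (lam : ℝ) (nmax : ℕ) :
    (∀ (ω : Ω) (n' n'' : ℕ), n' < n'' → n'' ≤ nmax → lam ≤ |truncPP f g n' n'' ω| →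
      ∃ k : ℕ, 1 ≤ k ∧ ∃ m : ℕ, stopSeq lam f g k ω = (m : ℕ∞) ∧ n' < m ∧ m ≤ n'') ∧
    (∀ ω : Ω, jumpCount lam f g nmax ω ≤
      ⨆ (k : ℕ) (_ : stopSeq lam f g k ω ≤ (nmax : ℕ∞)), (k : ℕ∞)) :=
  ⟨fun ω _ _ hlt _ hjump => exists_stopSeq_mem_Ioc lam f g ω hlt hjump,
    fun ω => jumpCount_le_iSup_stopSeq lam f g ω nmax⟩

theorem stopping_times_dominate_jump_count
    {Ω : Type} [m0 : MeasurableSpace Ω] (μ : Measure Ω) [IsProbabilityMeasure μ]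
    (𝓕 : Filtration ℕ m0) (f g : ℕ → Ω → ℝ)
    (hf : Martingale f 𝓕 μ) (hg : Martingale g 𝓕 μ)
    (lam : ℝ) (hlam : 0 < lam) (nmax : ℕ) (hnmax : 0 < nmax) :
    (∀ (ω : Ω) (n' n'' : ℕ), n' < n'' → n'' ≤ nmax → lam ≤ |truncPP f g n' n'' ω| →
      ∃ k : ℕ, 1 ≤ k ∧ ∃ m : ℕ, stopSeq lam f g k ω = (m : ℕ∞) ∧ n' < m ∧ m ≤ n'') ∧
    (∀ ω : Ω, jumpCount lam f g nmax ω ≤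
      ⨆ (k : ℕ) (_ : stopSeq lam f g k ω ≤ (nmax : ℕ∞)), (k : ℕ∞)) :=
  stopping_times_dominate_jump_count_general f g lam nmax

end
end

section
/- Let f = (f_n)_{n≥0} and g = (g_n)_{n≥0} be martingales with respect to the same filtration, fix λ > 0 and a positive integer n_max, define stopping times S_0 := 0 and S_k := min{ n > S_{k−1} : |Σ_{S_{k−1} < i < j ≤ n} df_i dg_j| ≥ λ/3, or max_{n' ∈ (S_{k−1}, n]} |f_{n'} − f_{S_{k−1}}| · |g_n − g_{n'}| ≥ λ/3 } (with min ∅ = ∞), and set T_k := S_k ∧ n_max. Let Ñ_λ(f,g) := sup{ k ≥ 0 : S_k ≤ n_max }. Then pointwise λ · Ñ_λ(f,g) ≤ 3 Σ_{k=1}^∞ |Σ_{T_{k−1} < i < j ≤ T_k} df_i dg_j| + 6 Σ_{k=1}^∞ (max_{n ∈ [T_{k−1}, T_k]} |f_n − f_{T_{k−1}}|) · (max_{n ∈ [T_{k−1}, T_k]} |g_n − g_{T_{k−1}}|). -/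
open MeasureTheory ENNReal

noncomputable section

/-- The truncated stopping times `T_k := S_k ∧ n_max`, as `ℕ`-valued random times. -/
def truncStop {Ω : Type} (lam : ℝ) (f g : ℕ → Ω → ℝ) (nmax : ℕ) (k : ℕ) (ω : Ω) : ℕ :=
  (min (stopSeq lam f g k ω) (nmax : ℕ∞)).toNat


lemma stopSeq_le_succ {Ω : Type} (lam : ℝ) (f g : ℕ → Ω → ℝ) (k : ℕ) (ω : Ω) :
    stopSeq lam f g k ω ≤ stopSeq lam f g (k + 1) ω := by
  rw [stopSeq]
  apply le_sInf
  rintro x ⟨m, n, hm, rfl, hmn, _⟩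
  rw [hm]
  exact_mod_cast hmn.le

lemma stopSeq_mono {Ω : Type} (lam : ℝ) (f g : ℕ → Ω → ℝ) (ω : Ω) :
    Monotone fun k => stopSeq lam f g k ω :=
  monotone_nat_of_le_succ fun k => stopSeq_le_succ lam f g k ω

lemma stopSeq_spec {Ω : Type} {lam : ℝ} {f g : ℕ → Ω → ℝ} {k : ℕ} {ω : Ω}
    (h : stopSeq lam f g (k + 1) ω ≠ ⊤) :
    ∃ m n : ℕ, stopSeq lam f g k ω = (m : ℕ∞) ∧ stopSeq lam f g (k + 1) ω = (n : ℕ∞) ∧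
      m < n ∧ jumpCond lam f g m n ω := by
  have hne : {x : ℕ∞ | ∃ m n : ℕ, stopSeq lam f g k ω = (m : ℕ∞) ∧ x = (n : ℕ∞) ∧
      m < n ∧ jumpCond lam f g m n ω}.Nonempty := by
    by_contra hc
    rw [Set.not_nonempty_iff_eq_empty] at hc
    rw [stopSeq, hc, sInf_empty] at h
    exact h rfl
  obtain ⟨m, n, hm, hn, hmn, hj⟩ := csInf_mem hne
  exact ⟨m, n, hm, by rw [stopSeq]; exact hn, hmn, hj⟩

lemma truncStop_eq {Ω : Type} {lam : ℝ} {f g : ℕ → Ω → ℝ} {nmax k : ℕ} {ω : Ω} {m : ℕ}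
    (hm : stopSeq lam f g k ω = (m : ℕ∞)) (hle : m ≤ nmax) :
    truncStop lam f g nmax k ω = m := by
  rw [truncStop, hm, min_eq_left (by exact_mod_cast hle)]
  simp

theorem pointwise_bound_for_jump_count
    {Ω : Type} [m0 : MeasurableSpace Ω] (μ : Measure Ω) [IsProbabilityMeasure μ]
    (𝓕 : Filtration ℕ m0) (f g : ℕ → Ω → ℝ)
    (hf : Martingale f 𝓕 μ) (hg : Martingale g 𝓕 μ)
    (lam : ℝ) (hlam : 0 < lam) (nmax : ℕ) (hnmax : 0 < nmax) (ω : Ω) :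
    ENNReal.ofReal lam *
        (⨆ (k : ℕ) (_ : stopSeq lam f g k ω ≤ (nmax : ℕ∞)), (k : ℝ≥0∞)) ≤
      3 * (∑' k : ℕ, ENNReal.ofReal
            |truncPP f g (truncStop lam f g nmax k ω) (truncStop lam f g nmax (k + 1) ω) ω|) +
      6 * (∑' k : ℕ,
            (⨆ (n : ℕ) (_ : truncStop lam f g nmax k ω ≤ n)
                (_ : n ≤ truncStop lam f g nmax (k + 1) ω),
              ENNReal.ofReal |f n ω - f (truncStop lam f g nmax k ω) ω|) *
            (⨆ (n : ℕ) (_ : truncStop lam f g nmax k ω ≤ n)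
                (_ : n ≤ truncStop lam f g nmax (k + 1) ω),
              ENNReal.ofReal |g n ω - g (truncStop lam f g nmax k ω) ω|)) := by
  set T := truncStop lam f g nmax with hT
  set A : ℕ → ℝ≥0∞ := fun k => ENNReal.ofReal |truncPP f g (T k ω) (T (k + 1) ω) ω| with hA
  set B : ℕ → ℝ≥0∞ := fun k =>
    (⨆ (n : ℕ) (_ : T k ω ≤ n) (_ : n ≤ T (k + 1) ω), ENNReal.ofReal |f n ω - f (T k ω) ω|) *
    (⨆ (n : ℕ) (_ : T k ω ≤ n) (_ : n ≤ T (k + 1) ω), ENNReal.ofReal |g n ω - g (T k ω) ω|)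
    with hB
  rw [ENNReal.mul_iSup]
  refine iSup_le fun k => ?_
  rw [ENNReal.mul_iSup]
  refine iSup_le fun hk => ?_
  have key : ∀ j, j < k → ENNReal.ofReal lam ≤ 3 * A j + 6 * B j := by
    intro j hj
    have hSj1 : stopSeq lam f g (j + 1) ω ≤ (nmax : ℕ∞) :=
      le_trans (stopSeq_mono lam f g ω (by omega : j + 1 ≤ k)) hk
    have hne : stopSeq lam f g (j + 1) ω ≠ ⊤ := by
      intro h; rw [h] at hSj1; exact (lt_irrefl _ (lt_of_le_of_lt hSj1 (WithTop.coe_lt_top _))).elim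
    obtain ⟨m, n, hm, hn, hmn, hjump⟩ := stopSeq_spec hne
    have hnle : n ≤ nmax := by rw [hn] at hSj1; exact_mod_cast hSj1
    have hmle : m ≤ nmax := le_trans hmn.le hnle
    have hTj : T j ω = m := truncStop_eq hm hmle
    have hTj1 : T (j + 1) ω = n := truncStop_eq hn hnle
    rcases hjump with hcase | ⟨n', hn'1, hn'2, hcase⟩
    · refine le_trans ?_ (le_add_right (le_refl (3 * A j)))
      simp only [hA, hTj, hTj1]
      calc ENNReal.ofReal lam = ENNReal.ofReal (3 * (lam / 3)) := by rw [mul_div_cancel₀]; norm_num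
        _ ≤ ENNReal.ofReal (3 * |truncPP f g m n ω|) := by
            apply ENNReal.ofReal_le_ofReal; nlinarith
        _ = 3 * ENNReal.ofReal |truncPP f g m n ω| := by
            rw [ENNReal.ofReal_mul (by norm_num)]; norm_num
    · refine le_trans ?_ (le_add_left (le_refl (6 * B j)))
      set Bf := ⨆ (n : ℕ) (_ : T j ω ≤ n) (_ : n ≤ T (j + 1) ω),
        ENNReal.ofReal |f n ω - f (T j ω) ω| with hBf
      set Bg := ⨆ (n : ℕ) (_ : T j ω ≤ n) (_ : n ≤ T (j + 1) ω),
        ENNReal.ofReal |g n ω - g (T j ω) ω| with hBg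
      have hf' : ENNReal.ofReal |f n' ω - f m ω| ≤ Bf := by
        simp only [hBf, hTj, hTj1]
        exact le_iSup_of_le n' (by rw [iSup_pos hn'1.le, iSup_pos hn'2])
      have hg1 : ENNReal.ofReal |g n ω - g m ω| ≤ Bg := by
        simp only [hBg, hTj, hTj1]
        exact le_iSup_of_le n (by rw [iSup_pos hmn.le, iSup_pos le_rfl])
      have hg2 : ENNReal.ofReal |g n' ω - g m ω| ≤ Bg := by
        simp only [hBg, hTj, hTj1]
        exact le_iSup_of_le n' (by rw [iSup_pos hn'1.le, iSup_pos hn'2])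
      have hgsplit : ENNReal.ofReal |g n ω - g n' ω| ≤ Bg + Bg := by
        refine le_trans ?_ (add_le_add hg1 hg2)
        refine le_trans (ENNReal.ofReal_le_ofReal ?_) (ENNReal.ofReal_add_le)
        have : g n ω - g n' ω = (g n ω - g m ω) - (g n' ω - g m ω) := by ring
        rw [this]; exact abs_sub _ _
      calc ENNReal.ofReal lam = ENNReal.ofReal (3 * (lam / 3)) := by rw [mul_div_cancel₀]; norm_num
        _ ≤ ENNReal.ofReal (3 * (|f n' ω - f m ω| * |g n ω - g n' ω|)) := by
            apply ENNReal.ofReal_le_ofReal; nlinarith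
        _ = 3 * (ENNReal.ofReal |f n' ω - f m ω| * ENNReal.ofReal |g n ω - g n' ω|) := by
            rw [ENNReal.ofReal_mul (by norm_num), ENNReal.ofReal_mul (abs_nonneg _)]; norm_num
        _ ≤ 3 * (Bf * (Bg + Bg)) := by
            exact mul_le_mul_right (mul_le_mul' hf' hgsplit) 3
        _ = 6 * (Bf * Bg) := by ring
        _ = 6 * B j := by simp only [hB, hBf, hBg, hTj, hTj1]
  calc ENNReal.ofReal lam * (k : ℝ≥0∞) = ∑ _j ∈ Finset.range k, ENNReal.ofReal lam := by
        simp [Finset.sum_const, nsmul_eq_mul, mul_comm]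
    _ ≤ ∑ j ∈ Finset.range k, (3 * A j + 6 * B j) :=
        Finset.sum_le_sum fun j hj => key j (Finset.mem_range.mp hj)
    _ = 3 * ∑ j ∈ Finset.range k, A j + 6 * ∑ j ∈ Finset.range k, B j := by
        rw [Finset.sum_add_distrib, Finset.mul_sum, Finset.mul_sum]
    _ ≤ 3 * ∑' j, A j + 6 * ∑' j, B j :=
        add_le_add (mul_le_mul_right (ENNReal.sum_le_tsum _) 3)
          (mul_le_mul_right (ENNReal.sum_le_tsum _) 6)


end
end

section
/- Let p, q ∈ (1,∞) and r ∈ (1/2,∞) with 1/p + 1/q = 1/r, and let ϱ ∈ (1,∞). Let f = (f_n)_{n≥0} and g = (g_n)_{n≥0} be martingales with respect to the same filtration and let λ > 0. If the weak-type jump estimate ‖ N_λ(f,g) ‖_{L^r} ≤ C_{p,q} λ^{−1} ‖f‖_{L^p} ‖g‖_{L^q} holds for all λ > 0 and all such pairs of martingales, where N_λ(f,g) is the supremum over m ∈ ℕ and increasing sequences n_0 < ⋯ < n_m of card{ k : |Π_{n_{k−1},n_k}(f,g)| ≥ λ }, then the weak-type variational estimate ‖ V^ϱ(f,g) ‖_{L^{r,∞}}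 ≤ C'_{p,q,ϱ} ‖f‖_{L^p} ‖g‖_{L^q} holds, where V^ϱ(f,g) := sup over m ∈ ℕ and n_0 < n_1 < ⋯ < n_m of ( Σ_{k=1}^m |Π_{n_{k−1},n_k}(f,g)|^ϱ )^{1/ϱ}. -/
open MeasureTheory ENNReal

noncomputable section

/-- `‖f‖_{L^p} = sup_n ‖f_n‖_{L^p}` for a discrete-time process. -/
def martLp {Ω : Type} [MeasurableSpace Ω] (μ : Measure Ω) (f : ℕ → Ω → ℝ) (p : ℝ) : ℝ≥0∞ :=
  ⨆ n, eLpNorm (f n) (ENNReal.ofReal p) μ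

/-- The λ-jump counting function `N_λ(f,g)` of the truncated paraproducts. -/
def jumpPP {Ω : Type} (lam : ℝ) (f g : ℕ → Ω → ℝ) (ω : Ω) : ℝ≥0∞ :=
  ⨆ (m : ℕ) (n : Fin (m + 1) → ℕ) (_ : StrictMono n),
    ((Finset.univ.filter
      fun k : Fin m => lam ≤ |truncPP f g (n k.castSucc) (n k.succ) ω|).card : ℝ≥0∞)

/-- The ϱ-variation `V^ϱ(f,g)` of the truncated paraproducts. -/
def varPP {Ω : Type} (ϱ : ℝ) (f g : ℕ → Ω → ℝ) (ω : Ω) : ℝ≥0∞ :=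
  ⨆ (m : ℕ) (n : Fin (m + 1) → ℕ) (_ : StrictMono n),
    (∑ k : Fin m, (ENNReal.ofReal |truncPP f g (n k.castSucc) (n k.succ) ω|) ^ ϱ) ^ (1 / ϱ)

/-!
Fix `α > 0` and `β = 2^((1-ϱ)/2) ∈ (0,1)`. If for every `l` fewer than
`K_l = β(1-β)/2 · (2/β)^l` truncated paraproducts have size `≥ α 2^-l`, then sorting them into
the dyadic layers `[α 2^-(l+1), α 2^-l]` bounds the `ϱ`-th power of the variation by
`∑ K_(l+1) (α 2^-l)^ϱ = α^ϱ`, because `2^-ϱ = β²/2`. So `{V^ϱ > α}` is covered by the events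
`{N_(α 2^-l) ≥ K_l}`, and Chebyshev's inequality with the jump estimate bounds `α^r` times
their measures by `(β^l / K_0 · C ‖f‖_p ‖g‖_q)^r`, a geometric series in `l`.
-/

open Finset

section Dyadic

variable {α ϱ : ℝ}

lemma ofReal_rpow_le_tsum_dyadic (hϱ : 0 < ϱ) {x : ℝ} (hx : 0 ≤ x) (hxα : x < α) :
    ENNReal.ofReal x ^ ϱ ≤
      ∑' l : ℕ, if α / 2 ^ (l + 1) ≤ x then ENNReal.ofReal (α / 2 ^ l) ^ ϱ else 0 := by
  rcases hx.eq_or_lt with rfl | hx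
  · simp [ENNReal.zero_rpow_of_pos hϱ]
  obtain ⟨l, hl, hl'⟩ := exists_nat_pow_near ((one_le_div₀ hx).2 hxα.le) (one_lt_two (α := ℝ))
  have hlow : α / 2 ^ (l + 1) ≤ x := by
    rw [div_lt_iff₀ hx] at hl'
    rw [div_le_iff₀ (by positivity)]
    linarith
  have hup : x ≤ α / 2 ^ l := by
    rw [le_div_iff₀ hx] at hl
    rw [le_div_iff₀ (by positivity)]
    linarith
  calc ENNReal.ofReal x ^ ϱ ≤ ENNReal.ofReal (α / 2 ^ l) ^ ϱ := by gcongr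
    _ = if α / 2 ^ (l + 1) ≤ x then ENNReal.ofReal (α / 2 ^ l) ^ ϱ else 0 := (if_pos hlow).symm
    _ ≤ _ := ENNReal.le_tsum l

variable {ι : Type*} (s : Finset ι) (x : ι → ℝ)

lemma sum_ofReal_rpow_le_tsum_card (hϱ : 0 < ϱ) (hx : ∀ k ∈ s, 0 ≤ x k ∧ x k < α) :
    ∑ k ∈ s, ENNReal.ofReal (x k) ^ ϱ ≤
      ∑' l : ℕ, #{k ∈ s | α / 2 ^ (l + 1) ≤ x k} * ENNReal.ofReal (α / 2 ^ l) ^ ϱ := by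
  calc ∑ k ∈ s, ENNReal.ofReal (x k) ^ ϱ
      ≤ ∑ k ∈ s, ∑' l : ℕ,
          if α / 2 ^ (l + 1) ≤ x k then ENNReal.ofReal (α / 2 ^ l) ^ ϱ else 0 :=
        sum_le_sum fun k hk => ofReal_rpow_le_tsum_dyadic hϱ (hx k hk).1 (hx k hk).2
    _ = _ := by
        rw [← Summable.tsum_finsetSum fun _ _ => ENNReal.summable]
        simp_rw [← sum_filter, sum_const, nsmul_eq_mul]

lemma sum_ofReal_abs_rpow_le_of_card_lt (hϱ : 0 < ϱ) {K : ℕ → ℝ≥0∞} (hK0 : K 0 ≤ 1)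
    (hcard : ∀ l, (#{k ∈ s | α / 2 ^ l ≤ |x k|} : ℝ≥0∞) < K l) :
    ∑ k ∈ s, ENNReal.ofReal |x k| ^ ϱ ≤ ∑' l : ℕ, K (l + 1) * ENNReal.ofReal (α / 2 ^ l) ^ ϱ := by
  have hlt : ∀ k ∈ s, |x k| < α := by
    have hcard0 : #{k ∈ s | α ≤ |x k|} < 1 := by
      simpa using (hcard 0).trans_le hK0
    simpa [Nat.lt_one_iff, filter_eq_empty_iff] using hcard0
  refine (sum_ofReal_rpow_le_tsum_card s _ hϱ fun k hk => ⟨abs_nonneg _, hlt k hk⟩).trans ?_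
  gcongr with l
  exact (hcard (l + 1)).le

end Dyadic

lemma varPP_le_of_jumpPP_lt {Ω : Type} {f g : ℕ → Ω → ℝ} {ω : Ω} {α ϱ : ℝ} (hϱ : 0 < ϱ)
    {K : ℕ → ℝ≥0∞} (hK0 : K 0 ≤ 1) (hjump : ∀ l, jumpPP (α / 2 ^ l) f g ω < K l) :
    varPP ϱ f g ω ≤ (∑' l : ℕ, K (l + 1) * ENNReal.ofReal (α / 2 ^ l) ^ ϱ) ^ (1 / ϱ) := by
  refine iSup_le fun m => iSup_le fun n => iSup_le fun hn => ?_
  gcongr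
  refine sum_ofReal_abs_rpow_le_of_card_lt _ _ hϱ hK0 fun l => lt_of_le_of_lt ?_ (hjump l)
  unfold jumpPP
  exact le_iSup₂_of_le m n <| le_iSup_of_le hn le_rfl

lemma setOf_lt_varPP_subset {Ω : Type} (f g : ℕ → Ω → ℝ) {α ϱ : ℝ} (hϱ : 0 < ϱ)
    {K : ℕ → ℝ≥0∞} (hK0 : K 0 ≤ 1)
    (hK : ∑' l : ℕ, K (l + 1) * ENNReal.ofReal (α / 2 ^ l) ^ ϱ ≤ ENNReal.ofReal α ^ ϱ) :
    {ω | ENNReal.ofReal α < varPP ϱ f g ω} ⊆ ⋃ l, {ω | K l ≤ jumpPP (α / 2 ^ l) f g ω} := by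
  intro ω hω
  by_contra hnot
  simp only [Set.mem_iUnion, Set.mem_ofPred_eq, not_exists, not_le] at hnot
  have hle := (varPP_le_of_jumpPP_lt hϱ hK0 hnot).trans <|
    (ENNReal.rpow_inv_le_iff hϱ).2 hK |>.trans_eq' (by rw [one_div])
  exact hle.not_gt hω

lemma measurable_truncPP {Ω : Type} [MeasurableSpace Ω] {f g : ℕ → Ω → ℝ}
    (hf : ∀ i, Measurable (f i)) (hg : ∀ i, Measurable (g i)) (n n' : ℕ) :
    Measurable (truncPP f g n n') := by
  unfold truncPP
  fun_prop

lemma measurable_jumpPP {Ω : Type} [MeasurableSpace Ω] {f g : ℕ → Ω → ℝ}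
    (hf : ∀ i, Measurable (f i)) (hg : ∀ i, Measurable (g i)) (lam : ℝ) :
    Measurable (jumpPP lam f g) := by
  refine Measurable.iSup fun m => Measurable.iSup fun n => Measurable.iSup fun _ => ?_
  simp_rw [card_filter, Nat.cast_sum, Nat.cast_ite, Nat.cast_one, Nat.cast_zero]
  exact Finset.measurable_sum _ fun k _ => Measurable.ite
    (measurableSet_le measurable_const (measurable_truncPP hf hg _ _).abs)
    measurable_const measurable_const

lemma rpow_mul_measure_le_lintegral_rpow {Ω : Type*} [MeasurableSpace Ω] {μ : Measure Ω}
    {F : Ω → ℝ≥0∞} (hF : AEMeasurable F μ) {r : ℝ} (hr : 0 < r) {k : ℝ≥0∞} (hk0 : k ≠ 0)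
    (hk : k ≠ ∞) (a : ℝ≥0∞) :
    a ^ r * μ {ω | k ≤ F ω} ≤ (a / k * (∫⁻ ω, F ω ^ r ∂μ) ^ (1 / r)) ^ r := by
  have hset : {ω | k ≤ F ω} = {ω | k ^ r ≤ F ω ^ r} := by
    ext ω
    simp only [Set.mem_ofPred_eq, ENNReal.rpow_le_rpow_iff hr]
  have hmarkov := meas_ge_le_lintegral_div (hF.pow_const r)
    (ENNReal.rpow_pos (pos_iff_ne_zero.2 hk0) hk).ne' (ENNReal.rpow_ne_top_of_nonneg hr.le hk)
  calc a ^ r * μ {ω | k ≤ F ω} ≤ a ^ r * ((∫⁻ ω, F ω ^ r ∂μ) / k ^ r) := by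
        rw [hset]
        exact mul_le_mul_right hmarkov _
    _ = _ := by
        rw [ENNReal.mul_rpow_of_nonneg _ _ hr.le, ENNReal.div_rpow_of_nonneg _ _ hr.le,
          ← ENNReal.rpow_mul, one_div_mul_cancel hr.ne', ENNReal.rpow_one, div_eq_mul_inv,
          div_eq_mul_inv]
        ring

lemma exists_two_rpow_mul_sq_eq_two {ϱ : ℝ} (hϱ : 1 < ϱ) :
    ∃ β : ℝ, 0 < β ∧ β < 1 ∧ 2 ^ ϱ * β ^ 2 = 2 := by
  refine ⟨2 ^ ((1 - ϱ) / 2), by positivity,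
    Real.rpow_lt_one_of_one_lt_of_neg one_lt_two (by linarith), ?_⟩
  rw [← Real.rpow_natCast, ← Real.rpow_mul zero_le_two, ← Real.rpow_add zero_lt_two]
  norm_num

def jumpThreshold (β : ℝ) (l : ℕ) : ℝ := β * (1 - β) / 2 * (2 / β) ^ l

lemma jumpThreshold_pos {β : ℝ} (hβ0 : 0 < β) (hβ1 : β < 1) (l : ℕ) :
    0 < jumpThreshold β l := by
  unfold jumpThreshold
  have : 0 < 1 - β := by linarith
  positivity

lemma jumpThreshold_zero_le_one {β : ℝ} (hβ0 : 0 < β) (hβ1 : β < 1) :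
    jumpThreshold β 0 ≤ 1 := by
  unfold jumpThreshold
  nlinarith

lemma tsum_jumpThreshold_mul_rpow {β ϱ α : ℝ} (hβ0 : 0 < β) (hβ1 : β < 1)
    (hβϱ : 2 ^ ϱ * β ^ 2 = 2) (hα : 0 < α) :
    ∑' l : ℕ, ENNReal.ofReal (jumpThreshold β (l + 1)) * ENNReal.ofReal (α / 2 ^ l) ^ ϱ =
      ENNReal.ofReal α ^ ϱ := by
  have hterm (l : ℕ) : jumpThreshold β (l + 1) * (α / 2 ^ l) ^ ϱ = (1 - β) * α ^ ϱ * β ^ l := by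
    have hβ : β ≠ 0 := hβ0.ne'
    rw [Real.div_rpow hα.le (by positivity), ← Real.rpow_pow_comm zero_le_two,
      show (2 : ℝ) ^ ϱ = 2 / β ^ 2 by field_simp; linarith]
    unfold jumpThreshold
    simp only [div_pow]
    field_simp
    ring
  have hβ1' : ENNReal.ofReal β < 1 := ENNReal.ofReal_lt_one.2 hβ1
  calc ∑' l : ℕ, ENNReal.ofReal (jumpThreshold β (l + 1)) * ENNReal.ofReal (α / 2 ^ l) ^ ϱ
      = ∑' l : ℕ, (1 - ENNReal.ofReal β) * ENNReal.ofReal α ^ ϱ * ENNReal.ofReal β ^ l := by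
        congr 1 with l
        have hβ1'' : 0 ≤ 1 - β := by linarith
        rw [ENNReal.ofReal_rpow_of_pos (by positivity),
          ← ENNReal.ofReal_mul (jumpThreshold_pos hβ0 hβ1 _).le, hterm,
          ENNReal.ofReal_mul (by positivity), ENNReal.ofReal_mul hβ1'',
          ENNReal.ofReal_sub _ hβ0.le, ENNReal.ofReal_one, ENNReal.ofReal_rpow_of_pos hα,
          ENNReal.ofReal_pow hβ0.le]
    _ = ENNReal.ofReal α ^ ϱ := by
        rw [ENNReal.tsum_mul_left, ENNReal.tsum_geometric, mul_right_comm,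
          ENNReal.mul_inv_cancel (tsub_pos_of_lt hβ1').ne' (by finiteness), one_mul]

lemma ofReal_div_jumpThreshold_mul_inv {β α : ℝ} (hβ0 : 0 < β) (hβ1 : β < 1) (hα : 0 < α)
    (l : ℕ) :
    ENNReal.ofReal α / ENNReal.ofReal (jumpThreshold β l) * (ENNReal.ofReal (α / 2 ^ l))⁻¹ =
      ENNReal.ofReal (jumpThreshold β 0)⁻¹ * ENNReal.ofReal β ^ l := by
  have h0 := jumpThreshold_pos hβ0 hβ1 0
  have hl := jumpThreshold_pos hβ0 hβ1 l
  rw [← ENNReal.ofReal_div_of_pos hl, ← ENNReal.ofReal_inv_of_pos (by positivity),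
    ← ENNReal.ofReal_mul (div_pos hα hl).le, ← ENNReal.ofReal_pow hβ0.le,
    ← ENNReal.ofReal_mul (inv_pos.2 h0).le]
  congr 1
  unfold jumpThreshold
  have : 1 - β ≠ 0 := by linarith
  have hβ : β ≠ 0 := hβ0.ne'
  simp only [div_pow]
  field_simp

lemma rpow_mul_measure_lt_varPP_le_tsum {Ω : Type} [MeasurableSpace Ω] (μ : Measure Ω)
    (f g : ℕ → Ω → ℝ) {β ϱ α : ℝ} (r : ℝ) (hβ0 : 0 < β) (hβ1 : β < 1)
    (hβϱ : 2 ^ ϱ * β ^ 2 = 2) (hϱ : 0 < ϱ) (hα : 0 < α) :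
    ENNReal.ofReal α ^ r * μ {ω | ENNReal.ofReal α < varPP ϱ f g ω} ≤
      ∑' l, ENNReal.ofReal α ^ r *
        μ {ω | ENNReal.ofReal (jumpThreshold β l) ≤ jumpPP (α / 2 ^ l) f g ω} := by
  rw [ENNReal.tsum_mul_left]
  gcongr
  refine (measure_mono (setOf_lt_varPP_subset f g hϱ ?_ ?_)).trans (measure_iUnion_le _)
  · exact ENNReal.ofReal_le_one.2 (jumpThreshold_zero_le_one hβ0 hβ1)
  · exact (tsum_jumpThreshold_mul_rpow hβ0 hβ1 hβϱ hα).le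

lemma rpow_mul_measure_jumpThreshold_le_jumpPP_le {Ω : Type} [MeasurableSpace Ω] {μ : Measure Ω}
    {f g : ℕ → Ω → ℝ} (hf : ∀ i, Measurable (f i)) (hg : ∀ i, Measurable (g i)) {r : ℝ}
    (hr : 0 < r) {β : ℝ} (hβ0 : 0 < β) (hβ1 : β < 1) {α : ℝ} (hα : 0 < α) {M : ℝ≥0∞} (l : ℕ)
    (hjump : (∫⁻ ω, jumpPP (α / 2 ^ l) f g ω ^ r ∂μ) ^ (1 / r) ≤
      M * (ENNReal.ofReal (α / 2 ^ l))⁻¹) :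
    ENNReal.ofReal α ^ r * μ {ω | ENNReal.ofReal (jumpThreshold β l) ≤ jumpPP (α / 2 ^ l) f g ω} ≤
      (ENNReal.ofReal (jumpThreshold β 0)⁻¹ * M * ENNReal.ofReal β ^ l) ^ r := by
  calc _ ≤ (ENNReal.ofReal α / ENNReal.ofReal (jumpThreshold β l) *
        (∫⁻ ω, jumpPP (α / 2 ^ l) f g ω ^ r ∂μ) ^ (1 / r)) ^ r :=
        rpow_mul_measure_le_lintegral_rpow (measurable_jumpPP hf hg _).aemeasurable hr
          (by simpa using jumpThreshold_pos hβ0 hβ1 l) ENNReal.ofReal_ne_top _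
    _ ≤ (ENNReal.ofReal α / ENNReal.ofReal (jumpThreshold β l) *
        (M * (ENNReal.ofReal (α / 2 ^ l))⁻¹)) ^ r := by gcongr
    _ = _ := by
        rw [mul_left_comm, ofReal_div_jumpThreshold_mul_inv hβ0 hβ1 hα]
        congr 1
        ring

lemma ENNReal.tsum_mul_pow_rpow {r : ℝ} (hr : 0 ≤ r) (x b : ℝ≥0∞) :
    ∑' l : ℕ, (x * b ^ l) ^ r = x ^ r * (1 - b ^ r)⁻¹ := by
  simp_rw [ENNReal.mul_rpow_of_nonneg _ _ hr, ← ENNReal.rpow_natCast, ← ENNReal.rpow_mul,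
    mul_comm _ r, ENNReal.rpow_mul, ENNReal.rpow_natCast]
  rw [ENNReal.tsum_mul_left, ENNReal.tsum_geometric]

theorem jump_estimate_implies_weak_variational_estimate_general
    (p q r ϱ : ℝ) (hr : 1 / 2 < r) (hϱ : 1 < ϱ) (C : ℝ≥0∞) (hC : C < ∞)
    (hjump : ∀ (Ω : Type) [m0 : MeasurableSpace Ω] (μ : Measure Ω), IsProbabilityMeasure μ →
      ∀ (𝓕 : Filtration ℕ m0) (f g : ℕ → Ω → ℝ),
        Martingale f 𝓕 μ → Martingale g 𝓕 μ → ∀ lam : ℝ, 0 < lam →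
        (∫⁻ ω, jumpPP lam f g ω ^ r ∂μ) ^ (1 / r) ≤
          C * (ENNReal.ofReal lam)⁻¹ * martLp μ f p * martLp μ g q) :
    ∃ C' : ℝ≥0∞, C' < ∞ ∧
      ∀ (Ω : Type) [m0 : MeasurableSpace Ω] (μ : Measure Ω), IsProbabilityMeasure μ →
      ∀ (𝓕 : Filtration ℕ m0) (f g : ℕ → Ω → ℝ),
        Martingale f 𝓕 μ → Martingale g 𝓕 μ →
        (⨆ (α : ℝ) (_ : 0 < α),
            ENNReal.ofReal α ^ r * μ {ω | ENNReal.ofReal α < varPP ϱ f g ω}) ^ (1 / r) ≤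
          C' * martLp μ f p * martLp μ g q := by
  have hr0 : 0 < r := by linarith
  obtain ⟨β, hβ0, hβ1, hβϱ⟩ := exists_two_rpow_mul_sq_eq_two hϱ
  have hβr : ENNReal.ofReal β ^ r < 1 := ENNReal.rpow_lt_one (ENNReal.ofReal_lt_one.2 hβ1) hr0
  set c := ENNReal.ofReal (jumpThreshold β 0)⁻¹
  set y := (1 - ENNReal.ofReal β ^ r)⁻¹
  refine ⟨C * c * y ^ r⁻¹, ?_, fun Ω _ μ _ 𝓕 f g hf hg => ?_⟩
  · have : y ≠ ∞ := ENNReal.inv_ne_top.2 (tsub_pos_of_lt hβr).ne'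
    finiteness
  have hfm (i : ℕ) : Measurable (f i) := ((hf.stronglyMeasurable i).mono (𝓕.le i)).measurable
  have hgm (i : ℕ) : Measurable (g i) := ((hg.stronglyMeasurable i).mono (𝓕.le i)).measurable
  set M := C * martLp μ f p * martLp μ g q
  rw [one_div, ENNReal.rpow_inv_le_iff hr0]
  refine iSup₂_le fun α hα => ?_
  calc ENNReal.ofReal α ^ r * μ {ω | ENNReal.ofReal α < varPP ϱ f g ω}
      ≤ ∑' l, ENNReal.ofReal α ^ r *
          μ {ω | ENNReal.ofReal (jumpThreshold β l) ≤ jumpPP (α / 2 ^ l) f g ω} :=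
        rpow_mul_measure_lt_varPP_le_tsum μ f g r hβ0 hβ1 hβϱ (by linarith) hα
    _ ≤ ∑' l : ℕ, (c * M * ENNReal.ofReal β ^ l) ^ r := by
        gcongr with l
        refine rpow_mul_measure_jumpThreshold_le_jumpPP_le hfm hgm hr0 hβ0 hβ1 hα l ?_
        exact (hjump Ω μ ‹_› 𝓕 f g hf hg _ (by positivity)).trans_eq (by ring)
    _ = (c * M) ^ r * y := ENNReal.tsum_mul_pow_rpow hr0.le _ _
    _ = (C * c * y ^ r⁻¹ * martLp μ f p * martLp μ g q) ^ r := by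
        rw [show C * c * y ^ r⁻¹ * martLp μ f p * martLp μ g q = c * M * y ^ r⁻¹ by ring,
          ENNReal.mul_rpow_of_nonneg (c * M) _ hr0.le, ← ENNReal.rpow_mul,
          inv_mul_cancel₀ hr0.ne', ENNReal.rpow_one]

theorem jump_estimate_implies_weak_variational_estimate
    (p q r ϱ : ℝ) (hp : 1 < p) (hq : 1 < q) (hr : 1 / 2 < r)
    (hpqr : 1 / p + 1 / q = 1 / r) (hϱ : 1 < ϱ) (C : ℝ≥0∞) (hC : C < ∞)
    (hjump : ∀ (Ω : Type) [m0 : MeasurableSpace Ω] (μ : Measure Ω), IsProbabilityMeasure μ →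
      ∀ (𝓕 : Filtration ℕ m0) (f g : ℕ → Ω → ℝ),
        Martingale f 𝓕 μ → Martingale g 𝓕 μ → ∀ lam : ℝ, 0 < lam →
        (∫⁻ ω, jumpPP lam f g ω ^ r ∂μ) ^ (1 / r) ≤
          C * (ENNReal.ofReal lam)⁻¹ * martLp μ f p * martLp μ g q) :
    ∃ C' : ℝ≥0∞, C' < ∞ ∧
      ∀ (Ω : Type) [m0 : MeasurableSpace Ω] (μ : Measure Ω), IsProbabilityMeasure μ →
      ∀ (𝓕 : Filtration ℕ m0) (f g : ℕ → Ω → ℝ),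
        Martingale f 𝓕 μ → Martingale g 𝓕 μ →
        (⨆ (α : ℝ) (_ : 0 < α),
            ENNReal.ofReal α ^ r * μ {ω | ENNReal.ofReal α < varPP ϱ f g ω}) ^ (1 / r) ≤
          C' * martLp μ f p * martLp μ g q :=
  jump_estimate_implies_weak_variational_estimate_general p q r ϱ hr hϱ C hC hjump

end
end
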